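/- Let ψ : X → ℤ^d be a cocycle over an ergodic transformation T that, viewed as an ℝ^d-valued cocycle, is cohomologous to a cocycle ψ* : X → ℝ^d for which there exist reals α₁,…,α_d, not all rational, such that Σⱼ αⱼψ*ⱼ(x) ∈ ℤ for a.e. x. Assuming Schmidt's theory of essential values (E_G(ψ) is a closed subgroup of G, invariant under cohomology, satisfies E_{ℤ^d}(ψ)=E_{ℝ^d}(ψ) for ℤ^d-valued ψ, contained in any closed subgroup containing the values of the cocycle, and E_G(ψ)=G iff T_ψ is ergodic), the skew product T_ψ : X × ℤ^d → X × ℤ^d is not ergodic. -/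

import Mathlib

open MeasureTheory

/-! Schmidt's argument: the values of `ψ*` lie in the closed subgroup `{v | α ⬝ᵥ v ∈ ℤ}` of `ℝ^d`,
hence so do the essential values of `ψ*` and, by cohomology invariance, those of `ψ`. If `T_ψ` were
ergodic they would contain `ℤ^d`; testing this subgroup on the basis vector `eⱼ` forces every
`αⱼ` to be an integer. -/

theorem AddMonoidHom.isClosed_comap_intCast_range {G : Type*} [AddGroup G] [TopologicalSpace G]
    (f : G →+ ℝ) (hf : Continuous f) :
    IsClosed ((Int.castAddHom ℝ).range.comap f : Set G) :=
  Int.isClosedEmbedding_coe_real.isClosed_range.preimage hf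

section IntDotProduct

variable {ι : Type*} [Fintype ι]

def intDotProductSubgroup (α : ι → ℝ) : AddSubgroup (ι → ℝ) :=
  (Int.castAddHom ℝ).range.comap (dotProductBilin ℝ ℝ α).toAddMonoidHom

theorem mem_intDotProductSubgroup {α v : ι → ℝ} :
    v ∈ intDotProductSubgroup α ↔ ∃ m : ℤ, α ⬝ᵥ v = m := by
  simp only [intDotProductSubgroup, AddSubgroup.mem_comap, AddMonoidHom.mem_range,
    Int.coe_castAddHom, LinearMap.toAddMonoidHom_coe, dotProductBilin_apply_apply, eq_comm]

theorem isClosed_intDotProductSubgroup (α : ι → ℝ) :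
    IsClosed (intDotProductSubgroup α : Set (ι → ℝ)) :=
  AddMonoidHom.isClosed_comap_intCast_range _ (continuous_const.dotProduct continuous_id)

theorem exists_intCast_eq_of_intCast_mem_intDotProductSubgroup [DecidableEq ι] {α : ι → ℝ}
    (h : ∀ m : ι → ℤ, (fun i => (m i : ℝ)) ∈ intDotProductSubgroup α) (j : ι) :
    ∃ n : ℤ, α j = n := by
  have hsingle : (fun i => ((Pi.single j 1 : ι → ℤ) i : ℝ)) = Pi.single j 1 := by
    ext i
    by_cases hij : i = j <;> simp [hij]
  have := h (Pi.single j 1)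
  rwa [hsingle, mem_intDotProductSubgroup, dotProduct_single_one] at this

end IntDotProduct

theorem stmt8_general {X : Type*} [MeasurableSpace X] {d : ℕ}
    (μ : Measure X)
    (T : X → X)
    (ψ : X → (Fin d → ℤ))
    -- the essential-value group of an ℝ^d-valued cocycle
    (E : (X → (Fin d → ℝ)) → Set (Fin d → ℝ))
    -- essential values are invariant under cohomology
    (hcoh : ∀ φ₁ φ₂ g : X → (Fin d → ℝ),
      (∀ x, φ₁ x = φ₂ x + g x - g (T x)) → E φ₁ = E φ₂)
    -- essential values lie in any closed subgroup containing the values a.e.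
    (hval : ∀ (φ : X → (Fin d → ℝ)) (H : AddSubgroup (Fin d → ℝ)),
      IsClosed (H : Set (Fin d → ℝ)) → (∀ᵐ x ∂μ, φ x ∈ H) → E φ ⊆ H)
    -- ergodicity of the ℤ^d skew product forces E_{ℝ^d}(ψ) ⊇ ℤ^d
    -- (via E_{ℤ^d}(ψ) = ℤ^d and E_{ℤ^d}(ψ) = E_{ℝ^d}(ψ))
    (herg : Ergodic (fun p : X × (Fin d → ℤ) => (T p.1, p.2 + ψ p.1))
        (μ.prod Measure.count) →
      ∀ m : Fin d → ℤ, (fun i => (m i : ℝ)) ∈ E (fun x i => (ψ x i : ℝ)))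
    (ψs g : X → (Fin d → ℝ))
    (hcohom : ∀ x, (fun i => (ψ x i : ℝ)) = ψs x + g x - g (T x))
    (α : Fin d → ℝ) (hα : ¬ ∀ j, ∃ q : ℚ, α j = (q : ℝ))
    (hint : ∀ᵐ x ∂μ, ∃ m : ℤ, ∑ j, α j * ψs x j = (m : ℝ)) :
    ¬ Ergodic (fun p : X × (Fin d → ℤ) => (T p.1, p.2 + ψ p.1))
        (μ.prod Measure.count) := by
  intro hergodic
  have hE : E (fun x i => (ψ x i : ℝ)) ⊆ intDotProductSubgroup α := by
    rw [hcoh _ ψs g hcohom]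
    exact hval ψs _ (isClosed_intDotProductSubgroup α)
      (hint.mono fun x hx => mem_intDotProductSubgroup.2 hx)
  refine hα fun j => ?_
  obtain ⟨n, hn⟩ :=
    exists_intCast_eq_of_intCast_mem_intDotProductSubgroup (fun m => hE (herg hergodic m)) j
  exact ⟨n, by rw [hn, Rat.cast_intCast]⟩

/-- If a `ℤ^d`-valued cocycle `ψ` over an ergodic `T` is cohomologous (as an
`ℝ^d`-valued cocycle) to `ψ*` with `∑ αⱼ ψ*ⱼ` integer-valued a.e. for some
`α` not all rational, then (assuming Schmidt's theory of essential values as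
hypotheses) the skew product `T_ψ : X × ℤ^d → X × ℤ^d` is not ergodic. -/
theorem stmt8 {X : Type*} [MeasurableSpace X] {d : ℕ}
    (μ : Measure X) [IsProbabilityMeasure μ]
    (T : X → X) (hT : Ergodic T μ)
    (ψ : X → (Fin d → ℤ))
    -- the essential-value group of an ℝ^d-valued cocycle
    (E : (X → (Fin d → ℝ)) → Set (Fin d → ℝ))
    -- essential values are invariant under cohomology
    (hcoh : ∀ φ₁ φ₂ g : X → (Fin d → ℝ),
      (∀ x, φ₁ x = φ₂ x + g x - g (T x)) → E φ₁ = E φ₂)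
    -- essential values lie in any closed subgroup containing the values a.e.
    (hval : ∀ (φ : X → (Fin d → ℝ)) (H : AddSubgroup (Fin d → ℝ)),
      IsClosed (H : Set (Fin d → ℝ)) → (∀ᵐ x ∂μ, φ x ∈ H) → E φ ⊆ H)
    -- ergodicity of the ℤ^d skew product forces E_{ℝ^d}(ψ) ⊇ ℤ^d
    -- (via E_{ℤ^d}(ψ) = ℤ^d and E_{ℤ^d}(ψ) = E_{ℝ^d}(ψ))
    (herg : Ergodic (fun p : X × (Fin d → ℤ) => (T p.1, p.2 + ψ p.1))
        (μ.prod Measure.count) →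
      ∀ m : Fin d → ℤ, (fun i => (m i : ℝ)) ∈ E (fun x i => (ψ x i : ℝ)))
    (ψs g : X → (Fin d → ℝ))
    (hcohom : ∀ x, (fun i => (ψ x i : ℝ)) = ψs x + g x - g (T x))
    (α : Fin d → ℝ) (hα : ¬ ∀ j, ∃ q : ℚ, α j = (q : ℝ))
    (hint : ∀ᵐ x ∂μ, ∃ m : ℤ, ∑ j, α j * ψs x j = (m : ℝ)) :
    ¬ Ergodic (fun p : X × (Fin d → ℤ) => (T p.1, p.2 + ψ p.1))
        (μ.prod Measure.count) :=
  stmt8_general μ T ψ E hcoh hval herg ψs g hcohom α hα hint
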